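/- Let B⁺ act linearly on V₁ = ⊕_{β∈Φ⁺} ℝ[t,t^{−1}]·x_β via σ_k with r specialized to r₀ ∈ (0,1), and let U = ⊕_{β∈Φ⁺}(ℝ_{≥0} ⊕ tℝ[t])x_β. For A ⊆ Φ⁺ let U_A = {Σ k_β x_β ∈ U : k_β ∈ tℝ[t] ⟺ β ∈ A}. Then for every x ∈ B⁺ and every A ⊆ Φ⁺, there is a unique subset A' ⊆ Φ⁺ with x·U_A ⊆ U_{A'}. -/
import Mathlib


/-- The fundamental root `α_i`, written in coordinates with respect to the basis of
fundamental roots. -/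
def esingle {n : ℕ} (i : Fin n) : Fin n → ℤ := Pi.single i 1

/-- A finite crystallographic simply-laced root system (type `A`, `D` or `E`),
given by the Gram matrix `C` of the fundamental roots `α_1, …, α_n` (all of squared
length 2):  `C i j = (α_i, α_j)`, which is `2` on the diagonal and `0` or `-1` off
the diagonal, and is positive definite.  Roots are coordinatized in the root
lattice `ℤⁿ`; the inner product is `ip`, and the positive roots are exactly the
lattice vectors of squared length `2` with nonnegative coordinates. -/
structure ADE (n : ℕ) where
  C : Matrix (Fin n) (Fin n) ℤ
  symm : ∀ i j, C i j = C j i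
  diag : ∀ i, C i i = 2
  offdiag : ∀ i j, i ≠ j → C i j = 0 ∨ C i j = -1
  posdef : ∀ v : Fin n → ℤ, v ≠ 0 → 0 < ∑ i, ∑ j, v i * C i j * v j

namespace ADE

variable {n : ℕ}

/-- The inner product `( , )` on the root lattice. -/
def ip (X : ADE n) (v w : Fin n → ℤ) : ℤ := ∑ i, ∑ j, v i * X.C i j * w j

/-- The set `Φ⁺` of positive roots: the lattice vectors of squared length `2`
all of whose coordinates (with respect to the fundamental roots) are nonnegative. -/
def Pos (X : ADE n) : Set (Fin n → ℤ) :=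
  {β | β ≠ 0 ∧ (∀ j, 0 ≤ β j) ∧ X.ip β β = 2}

/-- The height `ht(β)`: the sum of the coefficients of `β` with respect to the
fundamental roots. -/
def htZ (β : Fin n → ℤ) : ℤ := ∑ j, β j

end ADE

namespace ADE

variable {n : ℕ}

/-- The index type of the basis `{x_β : β ∈ Φ⁺}`. -/
abbrev PosIdx (X : ADE n) := {β : Fin n → ℤ // β ∈ X.Pos}

/-- The free module `V₁ = ⊕_{β ∈ Φ⁺} ℝ[t] x_β` (the sub-`ℝ[t]`-module of
`⊕ ℝ[t,t⁻¹] x_β` in which the cones `U_A` live). -/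
abbrev V1 (X : ADE n) := ADE.PosIdx X →₀ Polynomial ℝ

/-- The subset `U_A ⊆ U = ⊕_{β∈Φ⁺} (ℝ_{≥0} ⊕ tℝ[t]) x_β` of vectors
`u = Σ k_β x_β` with every `k_β ∈ ℝ_{≥0} ⊕ tℝ[t]`, and `k_β ∈ tℝ[t] ⟺ β ∈ A`. -/
def UA (X : ADE n) (A : Set (ADE.PosIdx X)) : Set (ADE.V1 X) :=
  {u | (∀ b, 0 ≤ (u b).coeff 0) ∧ ∀ b, ((u b).coeff 0 = 0 ↔ b ∈ A)}

end ADE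

namespace ADE
variable {n : ℕ}

lemma ip_esingle_right (X : ADE n) (v : Fin n → ℤ) (i : Fin n) :
    X.ip v (esingle i) = ∑ k, v k * X.C k i := by
  unfold ip esingle
  refine Finset.sum_congr rfl fun k _ => ?_
  rw [Finset.sum_eq_single i]
  · simp
  · intro j _ hj; simp [Pi.single_apply, hj]
  · simp

lemma ip_symm (X : ADE n) (v w : Fin n → ℤ) : X.ip v w = X.ip w v := by
  unfold ip
  rw [Finset.sum_comm]
  refine Finset.sum_congr rfl fun i _ => Finset.sum_congr rfl fun j _ => ?_
  rw [X.symm j i]; ring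

lemma ip_add_left (X : ADE n) (u v w : Fin n → ℤ) :
    X.ip (u + v) w = X.ip u w + X.ip v w := by
  unfold ip
  rw [← Finset.sum_add_distrib]
  refine Finset.sum_congr rfl fun i _ => ?_
  rw [← Finset.sum_add_distrib]
  refine Finset.sum_congr rfl fun j _ => ?_
  simp [Pi.add_apply]; ring


lemma ip_neg_left (X : ADE n) (v w : Fin n → ℤ) : X.ip (-v) w = -X.ip v w := by
  unfold ip
  rw [← Finset.sum_neg_distrib]
  refine Finset.sum_congr rfl fun i _ => ?_
  rw [← Finset.sum_neg_distrib]
  refine Finset.sum_congr rfl fun j _ => ?_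
  simp only [Pi.neg_apply]; ring

lemma ip_add_right (X : ADE n) (u v w : Fin n → ℤ) :
    X.ip u (v + w) = X.ip u v + X.ip u w := by
  rw [ip_symm, ip_add_left, ip_symm X v u, ip_symm X w u]

lemma ip_neg_right (X : ADE n) (u v : Fin n → ℤ) : X.ip u (-v) = -X.ip u v := by
  rw [ip_symm, ip_neg_left, ip_symm]

lemma ip_self_expand (X : ADE n) (v : Fin n → ℤ) :
    X.ip v v = ∑ j, v j * X.ip v (esingle j) := by
  simp only [ip_esingle_right, Finset.mul_sum]
  unfold ip
  rw [Finset.sum_comm]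
  refine Finset.sum_congr rfl fun j _ => Finset.sum_congr rfl fun i _ => ?_
  ring

lemma ip_nonneg (X : ADE n) (v : Fin n → ℤ) : 0 ≤ X.ip v v := by
  by_cases h : v = 0
  · subst h; unfold ip; simp
  · exact le_of_lt (X.posdef v h)

lemma ip_self_eq_zero (X : ADE n) {v : Fin n → ℤ} (h : X.ip v v = 0) : v = 0 := by
  by_contra hv
  exact absurd h (ne_of_gt (X.posdef v hv))

lemma ip_esingle_self (X : ADE n) (i : Fin n) : X.ip (esingle i) (esingle i) = 2 := by
  rw [ip_esingle_right]
  rw [Finset.sum_eq_single i]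
  · simp [esingle, X.diag]
  · intro j _ hj; simp [esingle, Pi.single_apply, hj]
  · simp

lemma abs_ip_le (X : ADE n) {β : Fin n → ℤ} (hβ : β ∈ X.Pos) (i : Fin n) :
    |X.ip β (esingle i)| ≤ 2 := by
  have h1 : 0 ≤ X.ip (β + esingle i) (β + esingle i) := X.ip_nonneg _
  have h2 : 0 ≤ X.ip (β + (-esingle i)) (β + (-esingle i)) := X.ip_nonneg _
  have e1 : X.ip (β + esingle i) (β + esingle i)
      = 4 + 2 * X.ip β (esingle i) := by
    simp only [ip_add_left, ip_add_right, ip_neg_left, ip_neg_right, hβ.2.2,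
      ip_esingle_self, ip_symm X (esingle i) β]; ring
  have e2 : X.ip (β + (-esingle i)) (β + (-esingle i))
      = 4 - 2 * X.ip β (esingle i) := by
    simp only [ip_add_left, ip_add_right, ip_neg_left, ip_neg_right, hβ.2.2,
      ip_esingle_self, ip_symm X (esingle i) β]; ring
  rw [e1] at h1; rw [e2] at h2
  rw [abs_le]; omega

lemma finite_Pos (X : ADE n) : X.Pos.Finite := by
  classical
  have hFinj : Function.Injective (fun (v : Fin n → ℤ) (i : Fin n) => X.ip v (esingle i)) := by
    intro v w h
    have hz : ∀ i, X.ip (v + (-w)) (esingle i) = 0 := by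
      intro i
      rw [ip_add_left, ip_neg_left]
      have : X.ip v (esingle i) = X.ip w (esingle i) := congrFun h i
      omega
    have hq : X.ip (v + (-w)) (v + (-w)) = 0 := by
      rw [ip_self_expand]
      exact Finset.sum_eq_zero fun j _ => by rw [hz j, mul_zero]
    have h0 := X.ip_self_eq_zero hq
    funext i
    have := congrFun h0 i
    simp only [Pi.add_apply, Pi.neg_apply, Pi.zero_apply] at this
    omega
  have hsub : X.Pos ⊆ (fun (v : Fin n → ℤ) (i : Fin n) => X.ip v (esingle i)) ⁻¹'
      (Set.pi Set.univ fun _ => Set.Icc (-2 : ℤ) 2) := by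
    intro β hβ i _
    have := X.abs_ip_le hβ i
    rw [abs_le] at this
    exact ⟨this.1, this.2⟩
  have hfin : (Set.pi Set.univ fun _ : Fin n => Set.Icc (-2 : ℤ) 2).Finite :=
    Set.Finite.pi fun _ => Set.finite_Icc _ _
  exact (hfin.preimage hFinj.injOn).subset hsub

instance instFinitePosIdx (X : ADE n) : Finite (ADE.PosIdx X) := (finite_Pos X).to_subtype

lemma coeff0_apply (X : ADE n) (f : Module.End (Polynomial ℝ) (ADE.V1 X))
    (u : ADE.V1 X) (c : ADE.PosIdx X) :
    ((f u) c).coeff 0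
      = ∑ b ∈ u.support, (u b).coeff 0 * ((f (Finsupp.single b 1)) c).coeff 0 := by
  conv_lhs => rw [← Finsupp.sum_single u]
  rw [Finsupp.sum, map_sum, Finsupp.finset_sum_apply, Polynomial.finset_sum_coeff]
  refine Finset.sum_congr rfl fun b _ => ?_
  have h : Finsupp.single b (u b) = (u b) • Finsupp.single b (1 : Polynomial ℝ) := by
    rw [Finsupp.smul_single', mul_one]
  rw [h, map_smul, Finsupp.smul_apply, smul_eq_mul, Polynomial.mul_coeff_zero]


end ADE

/-- The braid relations of the Artin monoid of simply-laced type. -/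
inductive BraidRel {n : ℕ} (X : ADE n) : FreeMonoid (Fin n) → FreeMonoid (Fin n) → Prop
  | comm (k l : Fin n) : X.ip (esingle k) (esingle l) = 0 →
      BraidRel X (FreeMonoid.of k * FreeMonoid.of l) (FreeMonoid.of l * FreeMonoid.of k)
  | braid (k l : Fin n) : X.ip (esingle k) (esingle l) = -1 →
      BraidRel X (FreeMonoid.of k * FreeMonoid.of l * FreeMonoid.of k)
        (FreeMonoid.of l * FreeMonoid.of k * FreeMonoid.of l)

/-- The positive Artin monoid `B⁺` of simply-laced type. -/
abbrev ArtinMonoid {n : ℕ} (X : ADE n) := (conGen (BraidRel X)).Quotient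

/-- Let `B⁺` act linearly on `V₁` by the Lawrence–Krammer representation with `r`
specialized to `r₀ ∈ (0,1)`, so that all matrix entries of all monoid elements
have nonnegative constant terms.  Then for every `x ∈ B⁺` and every `A ⊆ Φ⁺`
there is a unique subset `A' ⊆ Φ⁺` with `x · U_A ⊆ U_{A'}`. -/
theorem exists_unique_image_block {n : ℕ} (X : ADE n)
    (ρ : ArtinMonoid X →* Module.End (Polynomial ℝ) (ADE.V1 X))
    (hpos : ∀ (x : ArtinMonoid X) (b c : ADE.PosIdx X),
      0 ≤ ((ρ x (Finsupp.single b 1)) c).coeff 0) :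
    ∀ (x : ArtinMonoid X) (A : Set (ADE.PosIdx X)),
      ∃! A' : Set (ADE.PosIdx X), (ρ x) '' (ADE.UA X A) ⊆ ADE.UA X A' := by
  intro x A
  classical
  set M : ADE.PosIdx X → ADE.PosIdx X → ℝ :=
    fun b c => ((ρ x (Finsupp.single b 1)) c).coeff 0 with hM
  set A' : Set (ADE.PosIdx X) := {c | ∀ b, b ∉ A → M b c = 0} with hA'
  have key : ∀ u ∈ ADE.UA X A, ρ x u ∈ ADE.UA X A' := by
    intro u hu
    have hcoeff : ∀ c, ((ρ x u) c).coeff 0 = ∑ b ∈ u.support, (u b).coeff 0 * M b c :=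
      fun c => ADE.coeff0_apply X (ρ x) u c
    have hnn : ∀ c, ∀ b ∈ u.support, 0 ≤ (u b).coeff 0 * M b c :=
      fun c b _ => mul_nonneg (hu.1 b) (hpos x b c)
    refine ⟨fun c => ?_, fun c => ?_⟩
    · rw [hcoeff]; exact Finset.sum_nonneg (hnn c)
    · rw [hcoeff, Finset.sum_eq_zero_iff_of_nonneg (hnn c)]
      constructor
      · intro h b hb
        have hne : (u b).coeff 0 ≠ 0 := fun h0 => hb ((hu.2 b).1 h0)
        have hbsupp : b ∈ u.support := by
          rw [Finsupp.mem_support_iff]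
          intro h0
          exact hne (by rw [h0]; simp)
        rcases mul_eq_zero.1 (h b hbsupp) with h' | h'
        · exact absurd h' hne
        · exact h'
      · intro h b _
        by_cases hb : b ∈ A
        · rw [(hu.2 b).2 hb, zero_mul]
        · rw [h b hb, mul_zero]
  set u0 : ADE.V1 X :=
    Finsupp.equivFunOnFinite.symm (fun b => if b ∈ A then 0 else 1) with hu0def
  have hu0coe : ∀ b, u0 b = if b ∈ A then 0 else 1 := by
    intro b
    rw [hu0def]
    exact congrFun (Finsupp.equivFunOnFinite.apply_symm_apply (fun b => if b ∈ A then (0 : Polynomial ℝ) else 1)) b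
  have hu0 : u0 ∈ ADE.UA X A := by
    refine ⟨fun b => ?_, fun b => ?_⟩
    · rw [hu0coe]
      by_cases hb : b ∈ A <;> simp [hb]
    · rw [hu0coe]
      by_cases hb : b ∈ A <;> simp [hb]
  refine ⟨A', ?_, ?_⟩
  · rintro _ ⟨u, hu, rfl⟩
    exact key u hu
  · intro B hB
    have h1 : ρ x u0 ∈ ADE.UA X B := hB ⟨u0, hu0, rfl⟩
    have h2 : ρ x u0 ∈ ADE.UA X A' := key u0 hu0
    ext c
    rw [← (h1.2 c), (h2.2 c)]
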